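/- Let X_1 = X_2 = X_3 = {0, 1} and let m, M be positive reals with 2m + 2M = 1 and M > 2m. For {i,j} ∈ {{1,2},{1,3},{2,3}} define a probability measure μ_ij on X_i × X_j by μ_ij({(x_i, x_j)}) = M if x_i + x_j = 1 and μ_ij({(x_i, x_j)}) = m if x_i = x_j. Then the family {μ_12, μ_13, μ_23} is consistent, the densities of μ_ij with respect to the uniform product measure take only the two values 4m and 4M with ratio M/m > 2, yet there exists no uniting probability measure on X_1 × X_2 × X_3. -/

import Mathlib

open MeasureTheory
open scoped ENNReal

/-- The measure on `{0,1} × {0,1}` with mass `m` on the diagonal points and `M` on the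
off-diagonal points. -/
noncomputable def muPair (m M : ℝ) : Measure (Fin 2 × Fin 2) :=
  ∑ p : Fin 2 × Fin 2,
    (if p.1 = p.2 then ENNReal.ofReal m else ENNReal.ofReal M) • Measure.dirac p

/-- The uniform probability measure on `{0,1} × {0,1}`. -/
noncomputable def unifSq : Measure (Fin 2 × Fin 2) :=
  ∑ p : Fin 2 × Fin 2, ((4 : ℝ≥0∞))⁻¹ • Measure.dirac p

/-!
Two of any three points of `{0,1}` coincide, so the three events `x_i = x_j` cover `{0,1}³`.
Under a uniting measure each of them has the `μ_ij`-mass of the diagonal, `2m`; hence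
`1 ≤ 6m`, whereas `2m + 2M = 1` and `M > 2m` force `6m < 1`.
-/

lemma muPair_apply (m M : ℝ) (s : Set (Fin 2 × Fin 2)) :
    muPair m M s = ∑ p : Fin 2 × Fin 2,
      s.indicator (fun p => if p.1 = p.2 then ENNReal.ofReal m else ENNReal.ofReal M) p := by
  simp only [muPair, Measure.finsetSum_apply, Measure.smul_apply, Measure.dirac_apply,
    smul_eq_mul]
  refine Finset.sum_congr rfl fun p _ => ?_
  by_cases hp : p ∈ s <;> simp [hp]

lemma muPair_singleton (m M : ℝ) (p : Fin 2 × Fin 2) :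
    muPair m M {p} = if p.1 = p.2 then ENNReal.ofReal m else ENNReal.ofReal M := by
  simp [muPair_apply, Set.indicator_apply]

lemma muPair_diagonal (m M : ℝ) (hm : 0 ≤ m) :
    muPair m M (Set.diagonal (Fin 2)) = ENNReal.ofReal (2 * m) := by
  simp [muPair_apply, Set.indicator_apply, Fintype.sum_prod_type, Set.diagonal, two_mul,
    ENNReal.ofReal_add hm hm]

lemma muPair_univ (m M : ℝ) (hm : 0 ≤ m) (hM : 0 ≤ M) :
    muPair m M Set.univ = ENNReal.ofReal (2 * m + 2 * M) := by
  simp only [muPair_apply, Set.indicator_univ, Fintype.sum_prod_type, Fin.sum_univ_two]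
  simp only [↓reduceIte, zero_ne_one, one_ne_zero, two_mul, nonneg_add_self_iff, hm, hM,
    ENNReal.ofReal_add]
  ring

lemma muPair_map_swap (m M : ℝ) : (muPair m M).map Prod.swap = muPair m M := by
  refine Measure.ext_of_singleton fun p => ?_
  have hpre : Prod.swap ⁻¹' {p} = {p.swap} := by ext; simp [Prod.swap_eq_iff_eq_swap]
  rw [Measure.map_apply measurable_swap (measurableSet_singleton p), hpre, muPair_singleton,
    muPair_singleton, Prod.fst_swap, Prod.snd_swap]
  simp only [eq_comm]

lemma unifSq_singleton (p : Fin 2 × Fin 2) : unifSq {p} = 4⁻¹ := by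
  simp [unifSq, Measure.finsetSum_apply, Set.indicator_apply]

lemma ofReal_four_mul_mul_inv_four (x : ℝ) :
    ENNReal.ofReal (4 * x) * 4⁻¹ = ENNReal.ofReal x := by
  rw [mul_comm 4 x, ENNReal.ofReal_mul' zero_le_four, ENNReal.ofReal_ofNat, mul_assoc,
    ENNReal.mul_inv_cancel four_ne_zero ENNReal.ofNat_ne_top, mul_one]

lemma muPair_eq_withDensity (m M : ℝ) :
    muPair m M = unifSq.withDensity
      (fun p => if p.1 = p.2 then ENNReal.ofReal (4 * m) else ENNReal.ofReal (4 * M)) := by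
  refine Measure.ext_of_singleton fun p => ?_
  rw [withDensity_apply _ (measurableSet_singleton p), lintegral_singleton, unifSq_singleton,
    muPair_singleton]
  split_ifs <;> rw [ofReal_four_mul_mul_inv_four]

lemma map_fst_muPair_eq_map_snd (m M : ℝ) :
    (muPair m M).map Prod.fst = (muPair m M).map Prod.snd := by
  rw [← muPair_map_swap, Measure.map_map measurable_fst measurable_swap, muPair_map_swap]
  rfl

lemma preimage_diagonal_union_eq_univ :
    (fun x : Fin 2 × Fin 2 × Fin 2 => (x.1, x.2.1)) ⁻¹' Set.diagonal (Fin 2) ∪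
      (fun x : Fin 2 × Fin 2 × Fin 2 => (x.1, x.2.2)) ⁻¹' Set.diagonal (Fin 2) ∪
      (fun x : Fin 2 × Fin 2 × Fin 2 => x.2) ⁻¹' Set.diagonal (Fin 2) = Set.univ := by
  refine Set.eq_univ_of_forall fun ⟨a, b, c⟩ => ?_
  simp only [Set.mem_union, Set.mem_preimage, Set.mem_diagonal_iff]
  omega

lemma one_le_map_diagonal_add (μ : Measure (Fin 2 × Fin 2 × Fin 2)) [IsProbabilityMeasure μ] :
    1 ≤ μ.map (fun x => (x.1, x.2.1)) (Set.diagonal (Fin 2)) +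
      μ.map (fun x => (x.1, x.2.2)) (Set.diagonal (Fin 2)) +
      μ.map (fun x => x.2) (Set.diagonal (Fin 2)) := by
  have hD : MeasurableSet (Set.diagonal (Fin 2)) := .of_discrete
  rw [Measure.map_apply (by fun_prop) hD, Measure.map_apply (by fun_prop) hD,
    Measure.map_apply (by fun_prop) hD, ← measure_univ (μ := μ),
    ← preimage_diagonal_union_eq_univ]
  exact (measure_union_le _ _).trans (add_le_add (measure_union_le _ _) le_rfl)

/-- with `2m + 2M = 1`, `M > 2m`, the family `μ_12 = μ_13 = μ_23 = muPair m M`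
consists of probability measures, is consistent, has densities with respect to the uniform
product measure taking only the two values `4m`, `4M` with `M/m > 2`, and nevertheless admits
no uniting probability measure on `{0,1}³`. -/
theorem statement4 (m M : ℝ) (hm : 0 < m) (hM : 0 < M)
    (hsum : 2 * m + 2 * M = 1) (hMm : M > 2 * m) :
    IsProbabilityMeasure (muPair m M) ∧
    (Measure.map Prod.fst (muPair m M) = Measure.map Prod.fst (muPair m M) ∧
     Measure.map Prod.snd (muPair m M) = Measure.map Prod.fst (muPair m M) ∧
     Measure.map Prod.snd (muPair m M) = Measure.map Prod.snd (muPair m M)) ∧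
    (muPair m M = unifSq.withDensity
        (fun p => if p.1 = p.2 then ENNReal.ofReal (4 * m) else ENNReal.ofReal (4 * M)) ∧
      M / m > 2) ∧
    ¬ ∃ μ : Measure (Fin 2 × Fin 2 × Fin 2), IsProbabilityMeasure μ ∧
        Measure.map (fun x : Fin 2 × Fin 2 × Fin 2 => (x.1, x.2.1)) μ = muPair m M ∧
        Measure.map (fun x : Fin 2 × Fin 2 × Fin 2 => (x.1, x.2.2)) μ = muPair m M ∧
        Measure.map (fun x : Fin 2 × Fin 2 × Fin 2 => x.2) μ = muPair m M := by
  refine ⟨⟨?_⟩, ⟨rfl, (map_fst_muPair_eq_map_snd m M).symm, rfl⟩,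
    ⟨muPair_eq_withDensity m M, ?_⟩, ?_⟩
  · rw [muPair_univ m M hm.le hM.le, hsum, ENNReal.ofReal_one]
  · rw [gt_iff_lt, lt_div_iff₀ hm]
    linarith
  · rintro ⟨μ, hμ, h12, h13, h23⟩
    have h := one_le_map_diagonal_add μ
    rw [h12, h13, h23, muPair_diagonal m M hm.le, ← ENNReal.ofReal_add (by positivity)
      (by positivity), ← ENNReal.ofReal_add (by positivity) (by positivity),
      ENNReal.one_le_ofReal] at h
    linarith
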